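/- arXiv:1905.08098 — 2 statements merged into one kernel-verified Lean document; each statement's English description precedes it below -/
import Mathlib

section
/- For all positive integers p ≥ q with q = 1 or q = 2, the maximum covering radius over all relabelings of the (p,q)-type group satisfies L_max(G_{p,q}) = p. -/
open Equiv

/-- The ℓ∞-distance between two permutations of `Fin n`. -/
noncomputable def linfDist {n : ℕ} (f g : Perm (Fin n)) : ℕ :=
  Finset.univ.sup fun i : Fin n => (((f i).val : ℤ) - ((g i).val : ℤ)).natAbs

/-- The distance from a permutation to a code `C`. -/
noncomputable def distToCode {n : ℕ} (f : Perm (Fin n)) (C : Set (Perm (Fin n))) : ℕ :=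
  sInf (linfDist f '' C)

/-- The covering radius of a code `C ⊆ Sₙ`. -/
noncomputable def coveringRadius {n : ℕ} (C : Set (Perm (Fin n))) : ℕ :=
  sSup (Set.range fun f : Perm (Fin n) => distToCode f C)

/-- The relabeling `C^π = π C π⁻¹`. -/
def conjCode {n : ℕ} (π : Perm (Fin n)) (C : Set (Perm (Fin n))) : Set (Perm (Fin n)) :=
  (fun g => π * g * π⁻¹) '' C

/-- Maximum covering radius over all relabelings. -/
noncomputable def Lmax {n : ℕ} (C : Set (Perm (Fin n))) : ℕ :=
  sSup (Set.range fun π : Perm (Fin n) => coveringRadius (conjCode π C))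

/-- Minimum covering radius over all relabelings. -/
noncomputable def Lmin {n : ℕ} (C : Set (Perm (Fin n))) : ℕ :=
  sInf (Set.range fun π : Perm (Fin n) => coveringRadius (conjCode π C))

/-- The `(p,q)`-type group `G_{p,q} = ⟨(1,…,p), (p+1,…,p+q)⟩ ⊆ S_{p+q}`
(using `0`-indexed `Fin (p+q)`). -/
def Gpq (p q : ℕ) : Subgroup (Perm (Fin (p + q))) :=
  Subgroup.closure
    { ((List.finRange p).map (Fin.castLE (Nat.le_add_right p q))).formPerm,
      ((List.finRange q).map (Fin.natAdd p)).formPerm }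

/-- The transitive cyclic group `Gₙ = ⟨(1,2,…,n)⟩`. -/
def Gcyc (n : ℕ) : Subgroup (Perm (Fin n)) := Subgroup.closure {finRotate n}

/-- The natural dihedral group
`Dₙ = ⟨(1,2,…,n), ∏_{i=1}^{⌊n/2⌋} (i, n-i)⟩` (using `0`-indexed `Fin n`). -/
def Dn (n : ℕ) : Subgroup (Perm (Fin n)) :=
  Subgroup.closure
    { finRotate n,
      (((List.finRange (n / 2)).map fun i =>
        Equiv.swap (⟨i.val, by have := i.isLt; omega⟩ : Fin n)
          (⟨n - 2 - i.val, by have := i.isLt; omega⟩ : Fin n)).prod) }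

/-!
Two permutations of `Fin n` are always within distance `n - 1`, which settles `q = 1`. Distance
`n - 1` needs a position sent to `0` by one permutation and to `n - 1` by the other, so a code
`C ⊆ S_{p+2}` has covering radius at most `p` as soon as for all `x₁ ≠ x₂`, `y₁ ≠ y₂` some `g ∈ C`
has `g x₁ ≠ y₁` and `g x₂ ≠ y₂`; this property survives relabeling. `G_{p,2}` has it: inside a
block one of `1, c, c²` works for the block's cycle `c` (or `1, c` when `c` is a transposition),
and across the blocks one of `1, σ, τ, στ` does. Conversely `G_{p,q}` preserves the last block, so
the transposition of the first and last positions is at distance at least `p` from all of it.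
-/

open Function
open scoped Pointwise

section Distance

variable {n : ℕ}

lemma linfDist_le {f g : Perm (Fin n)} {m : ℕ}
    (h : ∀ i, (((f i).val : ℤ) - (g i).val).natAbs ≤ m) : linfDist f g ≤ m :=
  Finset.sup_le fun i _ => h i

lemma le_linfDist (f g : Perm (Fin n)) (i : Fin n) :
    (((f i).val : ℤ) - (g i).val).natAbs ≤ linfDist f g :=
  Finset.le_sup (f := fun i => (((f i).val : ℤ) - (g i).val).natAbs) (Finset.mem_univ i)

lemma linfDist_le_sub_one (f g : Perm (Fin n)) : linfDist f g ≤ n - 1 :=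
  linfDist_le fun i => by have := (f i).isLt; have := (g i).isLt; omega

lemma linfDist_le_of_apply_ne {m : ℕ} {f g : Perm (Fin (m + 2))}
    (h₀ : g (f⁻¹ 0) ≠ Fin.last (m + 1)) (h₁ : g (f⁻¹ (Fin.last (m + 1))) ≠ 0) :
    linfDist f g ≤ m := by
  refine linfDist_le fun i => ?_
  have k₀ : (f i).val = 0 → (g i).val ≠ m + 1 := fun hf hg => h₀ <| by
    rw [← Perm.eq_inv_iff_eq.2 (Fin.ext hf : f i = 0)]; exact Fin.ext hg
  have k₁ : (f i).val = m + 1 → (g i).val ≠ 0 := fun hf hg => h₁ <| by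
    rw [← Perm.eq_inv_iff_eq.2 (Fin.ext hf : f i = Fin.last (m + 1))]; exact Fin.ext hg
  have := (f i).isLt
  have := (g i).isLt
  omega

lemma distToCode_le_linfDist {f g : Perm (Fin n)} {C : Set (Perm (Fin n))} (hg : g ∈ C) :
    distToCode f C ≤ linfDist f g :=
  Nat.sInf_le (Set.mem_image_of_mem _ hg)

lemma le_distToCode {f : Perm (Fin n)} {C : Set (Perm (Fin n))} {m : ℕ} (hC : C.Nonempty)
    (h : ∀ g ∈ C, m ≤ linfDist f g) : m ≤ distToCode f C :=
  le_csInf (hC.image _) (Set.forall_mem_image.2 h)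

lemma coveringRadius_le {C : Set (Perm (Fin n))} {m : ℕ} (h : ∀ f, distToCode f C ≤ m) :
    coveringRadius C ≤ m :=
  csSup_le (Set.range_nonempty _) (Set.forall_mem_range.2 h)

lemma distToCode_le_coveringRadius (f : Perm (Fin n)) (C : Set (Perm (Fin n))) :
    distToCode f C ≤ coveringRadius C :=
  le_csSup (Set.finite_range _).bddAbove (Set.mem_range_self f)

lemma coveringRadius_le_sub_one (C : Set (Perm (Fin n))) : coveringRadius C ≤ n - 1 := by
  refine coveringRadius_le fun f => ?_
  rcases C.eq_empty_or_nonempty with rfl | ⟨g, hg⟩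
  · simp [distToCode]
  · exact (distToCode_le_linfDist hg).trans (linfDist_le_sub_one f g)

lemma coveringRadius_le_Lmax (C : Set (Perm (Fin n))) : coveringRadius C ≤ Lmax C :=
  calc coveringRadius C = coveringRadius (conjCode 1 C) := by simp [conjCode]
    _ ≤ Lmax C := le_csSup (Set.finite_range _).bddAbove (Set.mem_range_self 1)

lemma Lmax_le {C : Set (Perm (Fin n))} {m : ℕ} (h : ∀ π, coveringRadius (conjCode π C) ≤ m) :
    Lmax C ≤ m :=
  csSup_le (Set.range_nonempty _) (Set.forall_mem_range.2 h)

end Distance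

section PairAvoiding

variable {α : Type*}

def IsPairAvoiding (C : Set (Perm α)) : Prop :=
  ∀ x₁ x₂ y₁ y₂ : α, x₁ ≠ x₂ → y₁ ≠ y₂ → ∃ g ∈ C, g x₁ ≠ y₁ ∧ g x₂ ≠ y₂

lemma IsPairAvoiding.conjCode {n : ℕ} {C : Set (Perm (Fin n))} (hC : IsPairAvoiding C)
    (π : Perm (Fin n)) : IsPairAvoiding (conjCode π C) := by
  intro x₁ x₂ y₁ y₂ hx hy
  obtain ⟨g, hg, h₁, h₂⟩ := hC (π⁻¹ x₁) (π⁻¹ x₂) (π⁻¹ y₁) (π⁻¹ y₂)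
    (π⁻¹.injective.ne hx) (π⁻¹.injective.ne hy)
  exact ⟨π * g * π⁻¹, Set.mem_image_of_mem _ hg, fun h => h₁ (Perm.eq_inv_iff_eq.2 h),
    fun h => h₂ (Perm.eq_inv_iff_eq.2 h)⟩

lemma coveringRadius_le_of_isPairAvoiding {m : ℕ} {C : Set (Perm (Fin (m + 2)))}
    (hC : IsPairAvoiding C) : coveringRadius C ≤ m := by
  refine coveringRadius_le fun f => ?_
  have h0 : (0 : Fin (m + 2)) ≠ Fin.last (m + 1) := by simp [Fin.ext_iff]
  obtain ⟨g, hg, h₀, h₁⟩ := hC _ _ _ _ (f⁻¹.injective.ne h0) h0.symm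
  exact (distToCode_le_linfDist hg).trans (linfDist_le_of_apply_ne h₀ h₁)

variable {H : Subgroup (Perm α)} {c d : Perm α} {x₁ x₂ y₁ y₂ : α}

lemma exists_mem_apply_ne_of_swap (hc : c ∈ H) (hx : x₁ ≠ x₂) (hy : y₁ ≠ y₂)
    (h₁ : c x₁ = x₂) (h₂ : c x₂ = x₁) : ∃ g ∈ H, g x₁ ≠ y₁ ∧ g x₂ ≠ y₂ := by
  by_cases e : x₁ ≠ y₁ ∧ x₂ ≠ y₂
  · exact ⟨1, H.one_mem, e⟩
  · refine ⟨c, hc, ?_⟩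
    rw [h₁, h₂]
    grind

/-- Pigeonhole: `1, c, c²` give each of `x₁, x₂` three distinct images. -/
lemma exists_mem_apply_ne_of_three (hc : c ∈ H) (h₁ : c x₁ ≠ x₁) (h₁' : c (c x₁) ≠ x₁)
    (h₂ : c x₂ ≠ x₂) (h₂' : c (c x₂) ≠ x₂) : ∃ g ∈ H, g x₁ ≠ y₁ ∧ g x₂ ≠ y₂ := by
  have k₁ : c (c x₁) ≠ c x₁ := c.injective.ne h₁
  have k₂ : c (c x₂) ≠ c x₂ := c.injective.ne h₂
  by_cases e₀ : x₁ ≠ y₁ ∧ x₂ ≠ y₂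
  · exact ⟨1, H.one_mem, e₀⟩
  by_cases e₁ : c x₁ ≠ y₁ ∧ c x₂ ≠ y₂
  · exact ⟨c, hc, e₁⟩
  refine ⟨c * c, H.mul_mem hc hc, ?_⟩
  simp only [Perm.mul_apply]
  grind

lemma exists_mem_apply_ne_of_disjoint (hc : c ∈ H) (hd : d ∈ H) (hc₁ : c x₁ ≠ x₁)
    (hd₂ : d x₂ ≠ x₂) (hd₁ : d x₁ = x₁) (hc₂ : c x₂ = x₂) (hcd₂ : c (d x₂) = d x₂) :
    ∃ g ∈ H, g x₁ ≠ y₁ ∧ g x₂ ≠ y₂ := by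
  by_cases e₁ : x₁ = y₁ <;> by_cases e₂ : x₂ = y₂
  · exact ⟨c * d, H.mul_mem hc hd, by simp [hd₁, ← e₁, hc₁], by simp [hcd₂, ← e₂, hd₂]⟩
  · exact ⟨c, hc, by rwa [← e₁], by rwa [hc₂]⟩
  · exact ⟨d, hd, by rwa [hd₁], by rwa [← e₂]⟩
  · exact ⟨1, H.one_mem, e₁, e₂⟩

end PairAvoiding

lemma finRotate_apply_ne {m : ℕ} (hm : 2 ≤ m) (i : Fin m) : finRotate m i ≠ i := by
  obtain ⟨k, rfl⟩ : ∃ k, m = k + 2 := ⟨m - 2, by omega⟩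
  simp

lemma finRotate_finRotate_apply_ne {m : ℕ} (hm : 3 ≤ m) (i : Fin m) :
    finRotate m (finRotate m i) ≠ i := by
  obtain ⟨k, rfl⟩ : ∃ k, m = k + 3 := ⟨m - 3, by omega⟩
  simp [add_assoc, Fin.ext_iff, Fin.val_add, Nat.mod_eq_of_lt (show 2 < k + 3 by omega)]

lemma formPerm_map_finRange_apply {α : Type*} [DecidableEq α] {m : ℕ} {e : Fin m → α}
    (he : Injective e) (i : Fin m) :
    ((List.finRange m).map e).formPerm (e i) = e (finRotate m i) := by
  have hi : i.val < ((List.finRange m).map e).length := by simp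
  have := List.formPerm_apply_getElem _ ((List.nodup_finRange m).map he) i hi
  have := i.pos
  simp only [List.getElem_map, List.getElem_finRange, List.length_map, List.length_finRange] at *
  convert this using 3 <;> ext <;> simp [Fin.val_add]

lemma finRotate_two_apply_of_ne {i j : Fin 2} (h : i ≠ j) : finRotate 2 i = j := by
  revert i j; decide

section Gpq

variable {p q : ℕ}

def cycleFst (p q : ℕ) : Perm (Fin (p + q)) :=
  ((List.finRange p).map (Fin.castLE (Nat.le_add_right p q))).formPerm

def cycleSnd (p q : ℕ) : Perm (Fin (p + q)) :=
  ((List.finRange q).map (Fin.natAdd p)).formPerm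

lemma cycleFst_mem : cycleFst p q ∈ Gpq p q := Subgroup.subset_closure (Or.inl rfl)

lemma cycleSnd_mem : cycleSnd p q ∈ Gpq p q := Subgroup.subset_closure (Or.inr rfl)

@[simp]
lemma cycleFst_castAdd (i : Fin p) :
    cycleFst p q (Fin.castAdd q i) = Fin.castAdd q (finRotate p i) :=
  formPerm_map_finRange_apply (Fin.castLE_injective _) i

@[simp]
lemma cycleFst_natAdd (j : Fin q) : cycleFst p q (Fin.natAdd p j) = Fin.natAdd p j :=
  List.formPerm_apply_of_notMem (by simp [Fin.ext_iff]; omega)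

@[simp]
lemma cycleSnd_castAdd (i : Fin p) : cycleSnd p q (Fin.castAdd q i) = Fin.castAdd q i :=
  List.formPerm_apply_of_notMem (by simp [Fin.ext_iff]; omega)

@[simp]
lemma cycleSnd_natAdd (j : Fin q) :
    cycleSnd p q (Fin.natAdd p j) = Fin.natAdd p (finRotate q j) :=
  formPerm_map_finRange_apply (Fin.natAdd_injective _ _) j

lemma Gpq_le_stabilizer :
    Gpq p q ≤ MulAction.stabilizer (Perm (Fin (p + q))) {x : Fin (p + q) | p ≤ x.val} := by
  show Subgroup.closure {cycleFst p q, cycleSnd p q} ≤ _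
  refine (Subgroup.closure_le _).2 ?_
  rintro g (rfl | rfl) <;> rw [SetLike.mem_coe, MulAction.mem_stabilizer_set] <;> intro x <;>
    induction x using Fin.addCases <;> simp [Perm.smul_def, Nat.not_le.2 (Fin.is_lt _)]

lemma le_coveringRadius_Gpq (hq : 0 < q) :
    p ≤ coveringRadius (Gpq p q : Set (Perm (Fin (p + q)))) := by
  set z : Fin (p + q) := ⟨0, by omega⟩
  set l : Fin (p + q) := ⟨p + q - 1, by omega⟩
  refine (le_distToCode ⟨1, one_mem _⟩ fun g hg => ?_).trans
    (distToCode_le_coveringRadius (swap z l) _)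
  have hgl : p ≤ (g l).val :=
    (MulAction.mem_stabilizer_set.1 (Gpq_le_stabilizer hg) l).2 (by show p ≤ p + q - 1; omega)
  refine le_trans ?_ (le_linfDist _ g l)
  rw [swap_apply_right]
  simp [z]
  omega

theorem isPairAvoiding_Gpq_two (hp : 2 ≤ p) :
    IsPairAvoiding (Gpq p 2 : Set (Perm (Fin (p + 2)))) := by
  intro x₁ x₂ y₁ y₂ hx hy
  induction x₁ using Fin.addCases with
  | left i₁ =>
    induction x₂ using Fin.addCases with
    | left i₂ =>
      have hi : i₁ ≠ i₂ := fun h => hx (h ▸ rfl)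
      rcases hp.eq_or_lt with rfl | hp
      · exact exists_mem_apply_ne_of_swap cycleFst_mem hx hy
          (by rw [cycleFst_castAdd, finRotate_two_apply_of_ne hi])
          (by rw [cycleFst_castAdd, finRotate_two_apply_of_ne hi.symm])
      · exact exists_mem_apply_ne_of_three cycleFst_mem
          (by simpa using finRotate_apply_ne hp.le i₁)
          (by simpa using finRotate_finRotate_apply_ne hp i₁)
          (by simpa using finRotate_apply_ne hp.le i₂)
          (by simpa using finRotate_finRotate_apply_ne hp i₂)
    | right j₂ =>
      exact exists_mem_apply_ne_of_disjoint cycleFst_mem cycleSnd_mem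
        (by simpa using finRotate_apply_ne hp i₁) (by simp) (by simp) (by simp) (by simp)
  | right j₁ =>
    induction x₂ using Fin.addCases with
    | left i₂ =>
      exact exists_mem_apply_ne_of_disjoint cycleSnd_mem cycleFst_mem
        (by simp) (by simpa using finRotate_apply_ne hp i₂) (by simp) (by simp) (by simp)
    | right j₂ =>
      have hj : j₁ ≠ j₂ := fun h => hx (h ▸ rfl)
      exact exists_mem_apply_ne_of_swap cycleSnd_mem hx hy
        (by rw [cycleSnd_natAdd, finRotate_two_apply_of_ne hj])
        (by rw [cycleSnd_natAdd, finRotate_two_apply_of_ne hj.symm])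

end Gpq

/-- For all positive integers `p ≥ q` with `q = 1` or `q = 2`,
`L_max(G_{p,q}) = p`. -/
theorem stmt_7 (p q : ℕ) (hq : q = 1 ∨ q = 2) (hpq : q ≤ p) :
    Lmax (Gpq p q : Set (Perm (Fin (p + q)))) = p := by
  refine le_antisymm ?_ ((le_coveringRadius_Gpq (by omega)).trans (coveringRadius_le_Lmax _))
  rcases hq with rfl | rfl
  · exact Lmax_le fun _ => coveringRadius_le_sub_one _
  · exact Lmax_le fun π =>
      coveringRadius_le_of_isPairAvoiding ((isPairAvoiding_Gpq_two hpq).conjCode π)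
end

section
/- Let m ≥ 3 be an integer and let n be one of m(m−1)−2, m(m−1)−1, or m(m−1). Then the covering radius of the dihedral group D_n satisfies r(D_n) ≥ n − m. -/
/-!
Read positions in `ZMod n`: every element of `D_n` acts as `i ↦ i + k` or `i ↦ k - i`, so it
suffices to find `f` such that each of these `2n` maps `g` has a position `p` with
`|f p - g p| ≥ n - m`. For `m ≥ 4`, `f` puts the large value `n - m + a` at `largePos a` and the
small value `b` at `smallPos m n b` (`a, b < m`), so `g` is caught at a large-value position if
it lands on some `b ≤ a` there, and at a small-value position if it lands on some `n - m + a`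
with `a ≥ b`. For a fixed position the caught `k` form a window of `a + 1` (or `m - b`)
consecutive residues. Taking the positions to be triangular numbers `tri a`, or `n + 1 - tri a`,
makes these windows cover `ZMod n`, because the intervals `[tri a, tri a + a]` tile `ℕ` and
`n + c = m (m - 1) = 2 tri (m - 1)` with `c ≤ 2`: the two families of values each cover about
half of `ZMod n`. For `m = 3`, explicit permutations of `Fin 4`, `Fin 5`, `Fin 6` are checked by
`decide`.
-/

open Equiv

open Function

theorem exists_perm_apply_eq {α ι : Type*} [Finite α] {pos val : ι → α}
    (hpos : Injective pos) (hval : Injective val) : ∃ f : Perm α, ∀ i, f (pos i) = val i := by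
  classical
  let e : {a // a ∈ Set.range pos} ≃ {a // a ∈ Set.range val} :=
    (Equiv.ofInjective pos hpos).symm.trans (Equiv.ofInjective val hval)
  refine ⟨e.extendSubtype, fun i => ?_⟩
  rw [e.extendSubtype_apply_of_mem _ ⟨i, rfl⟩]
  simp [e]

theorem natAbs_sub_le_linfDist {n : ℕ} (f g : Perm (Fin n)) (i : Fin n) :
    (((f i : ℕ) : ℤ) - (g i : ℕ)).natAbs ≤ linfDist f g :=
  Finset.le_sup (f := fun i => (((f i : ℕ) : ℤ) - (g i : ℕ)).natAbs) (Finset.mem_univ i)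

theorem le_coveringRadius {n r : ℕ} {C : Set (Perm (Fin n))} (hC : C.Nonempty)
    (f : Perm (Fin n)) (hf : ∀ g ∈ C, r ≤ linfDist f g) : r ≤ coveringRadius C :=
  (le_csInf (hC.image _) (by rintro _ ⟨g, hg, rfl⟩; exact hf g hg)).trans
    (le_csSup (Set.finite_range _).bddAbove ⟨f, rfl⟩)

theorem natCast_finRotate_apply {n : ℕ} (i : Fin n) :
    ((finRotate n i : ℕ) : ZMod n) = i + 1 := by
  have := i.neZero
  simp [finRotate_apply, Fin.val_add, ZMod.natCast_mod]

def DnReflection (n : ℕ) : Perm (Fin n) :=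
  (((List.finRange (n / 2)).map fun i =>
    Equiv.swap (⟨i.val, by have := i.isLt; omega⟩ : Fin n)
      (⟨n - 2 - i.val, by have := i.isLt; omega⟩ : Fin n)).prod)

theorem Dn_eq_closure (n : ℕ) : Dn n = Subgroup.closure {finRotate n, DnReflection n} := rfl

def reflectionSwap (n v : ℕ) : Perm (Fin n) :=
  if h : v < n / 2 then swap ⟨v, by omega⟩ ⟨n - 2 - v, by omega⟩ else 1

theorem DnReflection_eq_prod (n : ℕ) :
    DnReflection n = ((List.range (n / 2)).map (reflectionSwap n)).prod := by
  rw [← List.map_coe_finRange_eq_range, List.map_map, DnReflection]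
  congr 1
  exact List.map_congr_left fun i _ => by simp only [comp_apply, reflectionSwap, dif_pos i.isLt]

theorem prod_reflectionSwap_apply {n K : ℕ} (hK : K ≤ n / 2) (j : Fin n) :
    ((((List.range K).map (reflectionSwap n)).prod j : Fin n) : ℕ) =
      if (j : ℕ) < K ∨ (j + 2 ≤ n ∧ n - 2 - j < K) then n - 2 - j else j := by
  induction K generalizing j with
  | zero => simp
  | succ K ih =>
    have hj := j.isLt
    have hswap : reflectionSwap n K = swap ⟨K, by omega⟩ ⟨n - 2 - K, by omega⟩ :=
      dif_pos (by omega)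
    have hswap_apply : (reflectionSwap n K j : ℕ) =
        if (j : ℕ) = K then n - 2 - K else if (j : ℕ) = n - 2 - K then K else j := by
      rw [hswap, swap_apply_def]
      split_ifs <;> simp only [Fin.ext_iff] at * <;> omega
    rw [List.range_succ, List.map_append, List.prod_append, List.map_singleton,
      List.prod_singleton, Perm.mul_apply, ih (by omega), hswap_apply]
    split_ifs <;> omega

theorem DnReflection_apply_val {n : ℕ} (j : Fin n) :
    (DnReflection n j : ℕ) = if (j : ℕ) + 1 = n then (j : ℕ) else n - 2 - j := by
  rw [DnReflection_eq_prod, prod_reflectionSwap_apply le_rfl]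
  have := j.isLt
  split_ifs <;> omega

theorem natCast_DnReflection_apply {n : ℕ} (j : Fin n) :
    ((DnReflection n j : ℕ) : ZMod n) = -2 - j := by
  rw [eq_sub_iff_add_eq, eq_neg_iff_add_eq_zero]
  have hj := j.isLt
  have hdvd : n ∣ (DnReflection n j : ℕ) + j + 2 := by
    rw [DnReflection_apply_val]
    split_ifs
    · exact ⟨2, by omega⟩
    · exact ⟨1, by omega⟩
  exact_mod_cast (ZMod.natCast_eq_zero_iff _ _).2 hdvd

theorem exists_rotation_or_reflection_of_mem_Dn {n : ℕ} {g : Perm (Fin n)} (hg : g ∈ Dn n) :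
    (∃ k : ZMod n, ∀ i : Fin n, ((g i : ℕ) : ZMod n) = i + k) ∨
      (∃ k : ZMod n, ∀ i : Fin n, ((g i : ℕ) : ZMod n) = k - i) := by
  rw [Dn_eq_closure] at hg
  induction hg using Subgroup.closure_induction with
  | mem g hg =>
    rcases hg with rfl | rfl
    · exact .inl ⟨1, natCast_finRotate_apply⟩
    · exact .inr ⟨-2, natCast_DnReflection_apply⟩
  | one => exact .inl ⟨0, by simp⟩
  | mul g h _ _ hg hh =>
    simp only [Perm.mul_apply]
    rcases hg with ⟨k, hk⟩ | ⟨k, hk⟩ <;> rcases hh with ⟨l, hl⟩ | ⟨l, hl⟩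
    · exact .inl ⟨l + k, fun i => by rw [hk, hl]; ring⟩
    · exact .inr ⟨l + k, fun i => by rw [hk, hl]; ring⟩
    · exact .inr ⟨k - l, fun i => by rw [hk, hl]; ring⟩
    · exact .inl ⟨k - l, fun i => by rw [hk, hl]; ring⟩
  | inv g _ hg =>
    have hinv (i : Fin n) := congrArg (fun j : Fin n => ((j : ℕ) : ZMod n)) (g.apply_symm_apply i)
    rcases hg with ⟨k, hk⟩ | ⟨k, hk⟩
    · exact .inl ⟨-k, fun i => by linear_combination hinv i - hk (g⁻¹ i)⟩
    · exact .inr ⟨k, fun i => by linear_combination hk (g⁻¹ i) - hinv i⟩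

theorem le_coveringRadius_Dn {n r : ℕ} (f : Perm (Fin n))
    (hrot : ∀ k : ZMod n, ∃ i : Fin n,
      r ≤ (((f i : ℕ) : ℤ) - ((i : ZMod n) + k).val).natAbs)
    (hrefl : ∀ k : ZMod n, ∃ i : Fin n, r ≤ (((f i : ℕ) : ℤ) - (k - i).val).natAbs) :
    r ≤ coveringRadius (Dn n : Set (Perm (Fin n))) := by
  obtain ⟨i₀, -⟩ := hrot 0
  have : NeZero n := ⟨i₀.pos.ne'⟩
  refine le_coveringRadius ⟨1, (Dn n).one_mem⟩ f fun g hg => ?_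
  have hval (i : Fin n) : (g i : ℕ) = ((g i : ℕ) : ZMod n).val :=
    (ZMod.val_natCast_of_lt (g i).isLt).symm
  obtain ⟨i, hi⟩ : ∃ i, r ≤ (((f i : ℕ) : ℤ) - (g i : ℕ)).natAbs := by
    rcases exists_rotation_or_reflection_of_mem_Dn hg with ⟨k, hk⟩ | ⟨k, hk⟩
    · obtain ⟨i, hi⟩ := hrot k
      exact ⟨i, by rwa [hval, hk]⟩
    · obtain ⟨i, hi⟩ := hrefl k
      exact ⟨i, by rwa [hval, hk]⟩
  exact hi.trans (natAbs_sub_le_linfDist f g i)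

theorem sub_le_coveringRadius_Dn_of_cover {n m : ℕ} (hmn : 2 * m ≤ n) (x y : ℕ → ℕ)
    (hx : ∀ a < m, x a < n) (hy : ∀ b < m, y b < n)
    (hx_inj : Set.InjOn x (Set.Iio m)) (hy_inj : Set.InjOn y (Set.Iio m))
    (hxy : ∀ a < m, ∀ b < m, x a ≠ y b)
    (hrot : ∀ j < n, (∃ a b, b ≤ a ∧ a < m ∧ x a + j ≡ b [MOD n]) ∨
      (∃ a b, b ≤ a ∧ a < m ∧ y b + j ≡ n - m + a [MOD n]))
    (hrefl : ∀ j < n, (∃ a b, b ≤ a ∧ a < m ∧ j ≡ x a + b [MOD n]) ∨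
      (∃ a b, b ≤ a ∧ a < m ∧ j ≡ y b + (n - m + a) [MOD n])) :
    n - m ≤ coveringRadius (Dn n : Set (Perm (Fin n))) := by
  let pos : Fin m ⊕ Fin m → Fin n :=
    Sum.elim (fun a => ⟨x a, hx a a.2⟩) (fun b => ⟨y b, hy b b.2⟩)
  let val : Fin m ⊕ Fin m → Fin n :=
    Sum.elim (fun a => ⟨n - m + a, by omega⟩) (fun b => ⟨b, by omega⟩)
  have hpos : Injective pos := by
    refine Injective.sumElim (fun a a' h => Fin.ext (hx_inj a.2 a'.2 (congrArg Fin.val h)))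
      (fun b b' h => Fin.ext (hy_inj b.2 b'.2 (congrArg Fin.val h))) fun a b h => ?_
    exact hxy a a.2 b b.2 (congrArg Fin.val h)
  have hval : Injective val := by
    refine Injective.sumElim (fun a a' h => ?_) (fun b b' h => ?_) fun a b h => ?_ <;>
      have h := congrArg Fin.val h <;> dsimp only at h <;> omega
  obtain ⟨f, hf⟩ := exists_perm_apply_eq hpos hval
  rcases n.eq_zero_or_pos with rfl | hn
  · simp
  have : NeZero n := ⟨hn.ne'⟩
  have hdist {u v : ℕ} {z : ZMod n} (hv : v < n) (hz : z = v)
      (huv : v + (n - m) ≤ u ∨ u + (n - m) ≤ v) :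
      n - m ≤ ((u : ℤ) - z.val).natAbs := by
    rw [hz, ZMod.val_natCast_of_lt hv]; omega
  refine le_coveringRadius_Dn f (fun k => ?_) fun k => ?_ <;>
    obtain ⟨j, hj, rfl⟩ : ∃ j < n, (j : ZMod n) = k :=
      ⟨k.val, k.val_lt, k.natCast_zmod_val⟩
  · rcases hrot j hj with ⟨a, b, hba, ha, h⟩ | ⟨a, b, hba, ha, h⟩
    · refine ⟨pos (.inl ⟨a, ha⟩), ?_⟩
      rw [hf]
      refine hdist (v := b) (by omega) ?_ (by simp [val]; omega)
      exact_mod_cast (ZMod.natCast_eq_natCast_iff _ _ _).2 h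
    · refine ⟨pos (.inr ⟨b, by omega⟩), ?_⟩
      rw [hf]
      refine hdist (v := n - m + a) (by omega) ?_ (by simp [val]; omega)
      exact_mod_cast (ZMod.natCast_eq_natCast_iff _ _ _).2 h
  · rcases hrefl j hj with ⟨a, b, hba, ha, h⟩ | ⟨a, b, hba, ha, h⟩
    · refine ⟨pos (.inl ⟨a, ha⟩), ?_⟩
      rw [hf]
      refine hdist (v := b) (by omega) ?_ (by simp [val]; omega)
      rw [(ZMod.natCast_eq_natCast_iff _ _ _).2 h]
      simp [pos]
    · refine ⟨pos (.inr ⟨b, by omega⟩), ?_⟩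
      rw [hf]
      refine hdist (v := n - m + a) (by omega) ?_ (by simp [val]; omega)
      rw [(ZMod.natCast_eq_natCast_iff _ _ _).2 h]
      simp [pos]

def tri : ℕ → ℕ
  | 0 => 0
  | a + 1 => tri a + (a + 1)

theorem tri_succ (a : ℕ) : tri (a + 1) = tri a + (a + 1) := rfl

theorem tri_strictMono : StrictMono tri :=
  strictMono_nat_of_lt_succ fun a => by rw [tri_succ]; omega

theorem two_mul_tri (a : ℕ) : 2 * tri a = a * (a + 1) := by
  induction a with
  | zero => rfl
  | succ a ih => rw [tri_succ, mul_add, ih]; ring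

theorem tri_add_lt_of_lt {a b : ℕ} (h : a < b) : tri a + a < tri b := by
  have := tri_strictMono.monotone (Nat.succ_le_of_lt h)
  rw [tri_succ] at this
  omega

theorem exists_tri_le_lt {p q j : ℕ} (hp : tri p ≤ j) (hq : j < tri q) :
    ∃ a, p ≤ a ∧ a < q ∧ tri a ≤ j ∧ j < tri (a + 1) := by
  induction q with
  | zero => exact absurd hq (Nat.not_lt_zero j)
  | succ q ih =>
    by_cases h : j < tri q
    · obtain ⟨a, hpa, haq, ha⟩ := ih h
      exact ⟨a, hpa, by omega, ha⟩
    · exact ⟨q, Nat.lt_succ_iff.1 (tri_strictMono.lt_iff_lt.1 (hp.trans_lt hq)), by omega,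
        not_lt.1 h, hq⟩

theorem tri_sub_recurrence {m : ℕ} (hm : 4 ≤ m) :
    tri m = tri (m - 1) + m ∧ tri (m - 1) = tri (m - 2) + (m - 1) ∧
      tri (m - 2) = tri (m - 3) + (m - 2) ∧ 1 ≤ tri (m - 3) := by
  obtain ⟨M, rfl⟩ : ∃ M, m = M + 4 := ⟨m - 4, by omega⟩
  refine ⟨rfl, rfl, rfl, ?_⟩
  show 1 ≤ tri (M + 1)
  rw [tri_succ]
  omega

def largePos (a : ℕ) : ℕ :=
  if a = 0 then 2 else if a = 1 then 0 else tri a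

def smallPos (m n b : ℕ) : ℕ :=
  if b = 0 then tri (m - 1) - 1 else if b = 1 then n - tri (m - 2)
  else if b = m - 2 then 1 else if b = m - 1 then n - 1 else n + 1 - tri (m - 1 - b)

theorem smallPos_zero {m n : ℕ} : smallPos m n 0 = tri (m - 1) - 1 := if_pos rfl

theorem smallPos_one {m n : ℕ} : smallPos m n 1 = n - tri (m - 2) := by simp [smallPos]

theorem smallPos_sub_two {m n : ℕ} (hm : 4 ≤ m) : smallPos m n (m - 2) = 1 := by
  unfold smallPos; rw [if_neg (by omega), if_neg (by omega), if_pos rfl]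

theorem smallPos_sub_one {m n : ℕ} (hm : 4 ≤ m) : smallPos m n (m - 1) = n - 1 := by
  unfold smallPos; rw [if_neg (by omega), if_neg (by omega), if_neg (by omega), if_pos rfl]

theorem smallPos_sub {m n a : ℕ} (h2 : 2 ≤ a) (h3 : a + 3 ≤ m) :
    smallPos m n (m - 1 - a) = n + 1 - tri a := by
  unfold smallPos
  rw [if_neg (by omega), if_neg (by omega), if_neg (by omega), if_neg (by omega),
    show m - 1 - (m - 1 - a) = a by omega]

theorem three_le_tri {a : ℕ} (h : 2 ≤ a) : 3 ≤ tri a := tri_strictMono.monotone h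

theorem largePos_of_two_le {a : ℕ} (h : 2 ≤ a) : largePos a = tri a := by
  unfold largePos; rw [if_neg (by omega), if_neg (by omega)]

theorem largePos_injective : Injective largePos := by
  intro a a' h
  have ha : 2 ≤ a → 3 ≤ tri a := three_le_tri
  have ha' : 2 ≤ a' → 3 ≤ tri a' := three_le_tri
  unfold largePos at h
  split_ifs at h <;> first | omega | exact tri_strictMono.injective h

theorem largePos_lt {m n c a : ℕ} (hm : 4 ≤ m) (hc : c ≤ 2) (hn : n + c = 2 * tri (m - 1))
    (ha : a < m) : largePos a < n := by
  obtain ⟨-, h₁, h₂, h₃⟩ := tri_sub_recurrence hm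
  have := tri_strictMono.monotone (show a ≤ m - 1 by omega)
  unfold largePos
  split_ifs <;> omega

theorem smallPos_lt {m n c b : ℕ} (hm : 4 ≤ m) (hc : c ≤ 2) (hn : n + c = 2 * tri (m - 1))
    (hb : b < m) : smallPos m n b < n := by
  obtain ⟨-, h₁, h₂, h₃⟩ := tri_sub_recurrence hm
  have : 2 ≤ m - 1 - b → 3 ≤ tri (m - 1 - b) := three_le_tri
  unfold smallPos
  split_ifs <;> omega

theorem smallPos_injOn {m n c : ℕ} (hm : 4 ≤ m) (hc : c ≤ 2) (hn : n + c = 2 * tri (m - 1)) :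
    Set.InjOn (smallPos m n) (Set.Iio m) := by
  intro b hb b' hb' h
  simp only [Set.mem_Iio] at hb hb'
  obtain ⟨-, h₁, h₂, h₃⟩ := tri_sub_recurrence hm
  have hmid : 2 ≤ b → tri (m - 1 - b) ≤ tri (m - 3) :=
    fun _ => tri_strictMono.monotone (by omega)
  have hmid' : 2 ≤ b' → tri (m - 1 - b') ≤ tri (m - 3) :=
    fun _ => tri_strictMono.monotone (by omega)
  have hinj : tri (m - 1 - b) = tri (m - 1 - b') → m - 1 - b = m - 1 - b' :=
    (tri_strictMono.injective ·)
  have h3 : 2 ≤ m - 1 - b → 3 ≤ tri (m - 1 - b) := three_le_tri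
  have h3' : 2 ≤ m - 1 - b' → 3 ≤ tri (m - 1 - b') := three_le_tri
  unfold smallPos at h
  split_ifs at h <;> omega

theorem largePos_ne_smallPos {m n c a b : ℕ} (hm : 4 ≤ m) (hc : c ≤ 2)
    (hn : n + c = 2 * tri (m - 1)) (ha : a < m) (hb : b < m) : largePos a ≠ smallPos m n b := by
  obtain ⟨-, h₁, h₂, h₃⟩ := tri_sub_recurrence hm
  have hle : tri a ≤ tri (m - 1) := tri_strictMono.monotone (by omega)
  have hlt : a < m - 1 → tri a + a < tri (m - 1) := tri_add_lt_of_lt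
  have heq : a = m - 1 → tri a = tri (m - 1) := congrArg tri
  have h3 : 2 ≤ a → 3 ≤ tri a := three_le_tri
  have hmid : 2 ≤ b → tri (m - 1 - b) ≤ tri (m - 3) :=
    fun _ => tri_strictMono.monotone (by omega)
  unfold largePos smallPos
  split_ifs <;> omega

theorem rotation_cover_large {m n j : ℕ} (hm : 3 ≤ m) (hj : j < n)
    (h : j ≤ 1 ∨ n ≤ j + tri (m - 1)) :
    ∃ a b, b ≤ a ∧ a < m ∧ largePos a + j ≡ b [MOD n] := by
  rcases (show j ≤ 1 ∨ j + 1 = n ∨ (n ≤ j + tri (m - 1) ∧ j + 2 ≤ n) by omega)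
    with hj₁ | hj₁ | ⟨hlo, hhi⟩
  · exact ⟨1, j, hj₁, by omega, by simp [largePos]; rfl⟩
  · refine ⟨2, 2, le_rfl, by omega, ?_⟩
    rw [largePos_of_two_le le_rfl, show tri 2 + j = 2 + n by rw [show tri 2 = 3 from rfl]; omega]
    exact Nat.add_modEq_right
  · obtain ⟨a, h1a, ham, hta, hta'⟩ :=
      exists_tri_le_lt (p := 1) (q := m - 1) (j := n - j - 1) (by show 1 ≤ _; omega) (by omega)
    have := tri_succ a
    obtain ⟨b, hb⟩ : ∃ b, tri (a + 1) + j = b + n := ⟨tri (a + 1) + j - n, by omega⟩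
    refine ⟨a + 1, b, by omega, by omega, ?_⟩
    rw [largePos_of_two_le (by omega), hb]
    exact Nat.add_modEq_right

theorem rotation_cover_small {m n c j : ℕ} (hm : 4 ≤ m) (hc : c ≤ 2)
    (hn : n + c = 2 * tri (m - 1)) (hj : 2 ≤ j) (h : j + tri (m - 1) ≤ n) :
    ∃ a b, b ≤ a ∧ a < m ∧ smallPos m n b + j ≡ n - m + a [MOD n] := by
  obtain ⟨-, h₁, h₂, h₃⟩ := tri_sub_recurrence hm
  rcases (show j + 2 ≤ tri (m - 3) ∨ (tri (m - 3) ≤ j + 1 ∧ j + 1 ≤ tri (m - 2)) ∨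
    tri (m - 2) ≤ j by omega) with hj₁ | ⟨hlo, hhi⟩ | hj₁
  · obtain ⟨a, h2a, ham, hta, hta'⟩ :=
      exists_tri_le_lt (p := 2) (q := m - 3) (j := j + 1) (by show 3 ≤ _; omega) (by omega)
    have := tri_succ a
    refine ⟨m + 1 + j - tri (a + 1), m - 1 - (a + 1), by omega, by omega, ?_⟩
    rw [smallPos_sub (by omega) (by omega),
      show n + 1 - tri (a + 1) + j = n - m + (m + 1 + j - tri (a + 1)) by omega]
  · refine ⟨m + j - tri (m - 2), 1, by omega, by omega, ?_⟩
    rw [smallPos_one, show n - tri (m - 2) + j = n - m + (m + j - tri (m - 2)) by omega]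
  · refine ⟨j + c + m - 1 - tri (m - 1), 0, by omega, by omega, ?_⟩
    rw [smallPos_zero, show tri (m - 1) - 1 + j = n - m + (j + c + m - 1 - tri (m - 1)) by omega]

theorem reflection_cover_large {m n j : ℕ} (hm : 2 ≤ m) (hj : j < tri m) :
    ∃ a b, b ≤ a ∧ a < m ∧ j ≡ largePos a + b [MOD n] := by
  rcases (show j ≤ 1 ∨ j = 2 ∨ 3 ≤ j by omega) with hj₁ | rfl | hj₁
  · exact ⟨1, j, hj₁, hm, by simp [largePos]; rfl⟩
  · exact ⟨0, 0, le_rfl, by omega, by simp [largePos]; rfl⟩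
  · obtain ⟨a, h2a, ham, hta, hta'⟩ := exists_tri_le_lt (p := 2) (q := m) (j := j) hj₁ hj
    have := tri_succ a
    refine ⟨a, j - tri a, by omega, ham, ?_⟩
    rw [largePos_of_two_le h2a, show tri a + (j - tri a) = j by omega]

theorem reflection_cover_small {m n c j : ℕ} (hm : 4 ≤ m) (hc : c ≤ 2)
    (hn : n + c = 2 * tri (m - 1)) (h : tri m ≤ j) (hj : j < n) :
    ∃ a b, b ≤ a ∧ a < m ∧ j ≡ smallPos m n b + (n - m + a) [MOD n] := by
  obtain ⟨h₀, h₁, h₂, h₃⟩ := tri_sub_recurrence hm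
  rcases (show j + 1 = n ∨ j + 2 = n ∨ j + 3 ≤ n by omega) with hj₁ | hj₁ | hj₁
  · refine ⟨m - 2, m - 2, le_rfl, by omega, ?_⟩
    rw [smallPos_sub_two hm, show 1 + (n - m + (m - 2)) = j by omega]
  · refine ⟨m - 1, m - 1, le_rfl, by omega, ?_⟩
    rw [smallPos_sub_one hm, show n - 1 + (n - m + (m - 1)) = j + n by omega]
    exact Nat.add_modEq_right.symm
  · obtain ⟨a, h2a, ham, hta, hta'⟩ :=
      exists_tri_le_lt (p := 2) (q := m - 2) (j := n - j) (by show 3 ≤ _; omega) (by omega)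
    have := tri_succ a
    refine ⟨j + tri a + m - 1 - n, m - 1 - a, by omega, by omega, ?_⟩
    rw [smallPos_sub (by omega) (by omega),
      show n + 1 - tri a + (n - m + (j + tri a + m - 1 - n)) = j + n by omega]
    exact Nat.add_modEq_right.symm

theorem sub_le_coveringRadius_Dn_of_four_le {m n c : ℕ} (hm : 4 ≤ m) (hc : c ≤ 2)
    (hn : n + c = m * (m - 1)) : n - m ≤ coveringRadius (Dn n : Set (Perm (Fin n))) := by
  have hn' : n + c = 2 * tri (m - 1) := by
    rw [two_mul_tri, Nat.sub_add_cancel (by omega : 1 ≤ m), mul_comm, hn]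
  obtain ⟨h₀, h₁, h₂, h₃⟩ := tri_sub_recurrence hm
  refine sub_le_coveringRadius_Dn_of_cover (by omega) largePos (smallPos m n)
    (fun a ha => largePos_lt hm hc hn' ha) (fun b hb => smallPos_lt hm hc hn' hb)
    largePos_injective.injOn (smallPos_injOn hm hc hn')
    (fun a ha b hb => largePos_ne_smallPos hm hc hn' ha hb) (fun j hj => ?_) (fun j hj => ?_)
  · by_cases h : j ≤ 1 ∨ n ≤ j + tri (m - 1)
    · exact .inl (rotation_cover_large (by omega) hj h)
    · exact .inr (rotation_cover_small hm hc hn' (by omega) (by omega))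
  · by_cases h : j < tri m
    · exact .inl (reflection_cover_large (by omega) h)
    · exact .inr (reflection_cover_small hm hc hn' (by omega) hj)

theorem one_le_coveringRadius_Dn_four : 1 ≤ coveringRadius (Dn 4 : Set (Perm (Fin 4))) :=
  le_coveringRadius_Dn (Equiv.ofBijective ![0, 1, 3, 2] (by decide)) (by decide) (by decide)

theorem two_le_coveringRadius_Dn_five : 2 ≤ coveringRadius (Dn 5 : Set (Perm (Fin 5))) :=
  le_coveringRadius_Dn (Equiv.ofBijective ![0, 2, 3, 1, 4] (by decide)) (by decide) (by decide)

theorem three_le_coveringRadius_Dn_six : 3 ≤ coveringRadius (Dn 6 : Set (Perm (Fin 6))) :=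
  le_coveringRadius_Dn (Equiv.ofBijective ![0, 2, 3, 4, 1, 5] (by decide)) (by decide) (by decide)

/-- If `m ≥ 3` and `n` is one of `m(m−1)−2`, `m(m−1)−1`, `m(m−1)`, then
`r(Dₙ) ≥ n − m`. -/
theorem stmt_11 (m n : ℕ) (hm : 3 ≤ m)
    (hn : (n : ℤ) = (m : ℤ) * ((m : ℤ) - 1) - 2 ∨ (n : ℤ) = (m : ℤ) * ((m : ℤ) - 1) - 1 ∨
      (n : ℤ) = (m : ℤ) * ((m : ℤ) - 1)) :
    (n : ℤ) - (m : ℤ) ≤ (coveringRadius (Dn n : Set (Perm (Fin n))) : ℤ) := by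
  obtain ⟨c, hc, hnc⟩ : ∃ c : ℕ, c ≤ 2 ∧ (n : ℤ) + c = m * (m - 1) := by
    rcases hn with h | h | h
    exacts [⟨2, le_rfl, by rw [h]; ring⟩, ⟨1, by norm_num, by rw [h]; ring⟩,
      ⟨0, by norm_num, by rw [h]; ring⟩]
  have hnc : n + c = m * (m - 1) := by
    zify [show 1 ≤ m by omega]; exact hnc
  rcases (show m = 3 ∨ 4 ≤ m by omega) with rfl | hm
  · rcases (show n = 4 ∨ n = 5 ∨ n = 6 by omega) with rfl | rfl | rfl
    · have := one_le_coveringRadius_Dn_four; omega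
    · have := two_le_coveringRadius_Dn_five; omega
    · have := three_le_coveringRadius_Dn_six; omega
  · have := sub_le_coveringRadius_Dn_of_four_le hm hc hnc; omega
end
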